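/- With notation as before (K totally real of degree d, weights r, S₁ = {σ : r_σ > 0}, weighted norm ‖·‖_r, and ε ≤ 1), define the height H(q) = max_{σ ∈ S₁} |σ(q)| · ‖θ(q)‖_r^{r_σ} for q ∈ O_K(r,ε). Then for all q ∈ O_K(r,ε): ‖θ(q)‖_r^{1/d} ≤ H(q). -/

import Mathlib

open scoped NumberField
open Classical

noncomputable section

variable (K : Type) [Field K] [NumberField K]

/-- The Galois embedding `θ : K → ∏_{σ ∈ S} ℝ`, `θ(p) = (σ(p))_σ`. -/
def galoisEmbed (p : K) : (K →+* ℝ) → ℝ := fun σ => σ p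

/-- The finset `S₁` of embeddings with positive weight `r_σ > 0`. -/
def posWeights (r : (K →+* ℝ) → ℝ) : Finset (K →+* ℝ) :=
  Finset.univ.filter fun σ => 0 < r σ

/-- The weighted `r`-norm `‖x‖_r = max_{σ ∈ S₁} |x_σ|^{1/r_σ}`. -/
def rnorm (r : (K →+* ℝ) → ℝ) (hS₁ : (posWeights K r).Nonempty)
    (x : (K →+* ℝ) → ℝ) : ℝ :=
  (posWeights K r).sup' hS₁ fun σ => |x σ| ^ (1 / r σ)

/-- The set `𝓞_K(r,ε)` of nonzero integers `q` with `|σ(q)| ≤ ε` for all `σ ∈ S₂`. -/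
def OKre (r : (K →+* ℝ) → ℝ) (ε : ℝ) : Set (𝓞 K) :=
  {q | q ≠ 0 ∧ ∀ σ : K →+* ℝ, ¬ 0 < r σ → |σ (q : K)| ≤ ε}

/-- The height `H(q) = max_{σ ∈ S₁} |σ(q)|·‖θ(q)‖_r^{r_σ}`. -/
def height (r : (K →+* ℝ) → ℝ) (hS₁ : (posWeights K r).Nonempty) (q : 𝓞 K) : ℝ :=
  (posWeights K r).sup' hS₁ fun σ =>
    |σ (q : K)| * (rnorm K r hS₁ (galoisEmbed K (q : K))) ^ (r σ)

end

/-!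
The product formula gives `∏_{σ ∈ S} |σ(q)| = |N(q)| ≥ 1`, and the factors over `S₂` are at most
`ε ≤ 1`, so `∏_{σ ∈ S₁} |σ(q)| ≥ 1`. Since `|σ(q)| ≤ ‖θ(q)‖_r ^ r_σ` on `S₁` and the weights on `S₁`
sum to `1`, this forces `‖θ(q)‖_r ≥ 1` and
`‖θ(q)‖_r = ∏_{σ ∈ S₁} ‖θ(q)‖_r ^ r_σ ≤ ∏_{σ ∈ S₁} |σ(q)| ‖θ(q)‖_r ^ r_σ ≤ H(q) ^ |S₁|`.
Taking `|S₁|`-th roots and using `|S₁| ≤ d` gives the claim.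
-/

open Finset

section NormProduct

variable {K : Type} [Field K] [NumberField K]

theorem abs_norm_eq_prod_abs_of_card_eq_finrank
    (hK : Fintype.card (K →+* ℝ) = Module.finrank ℚ K) (x : K) :
    |(Algebra.norm ℚ x : ℝ)| = ∏ σ : K →+* ℝ, |σ x| := by
  have hbij : Function.Bijective fun σ : K →+* ℝ => Complex.ofRealHom.comp σ := by
    rw [Fintype.bijective_iff_injective_and_card, hK, NumberField.Embeddings.card]
    exact ⟨fun σ τ h => RingHom.ext fun y => Complex.ofReal_injective (RingHom.congr_fun h y), rfl⟩
  calc |(Algebra.norm ℚ x : ℝ)| = ‖∏ φ : K →ₐ[ℚ] ℂ, φ x‖ := by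
        rw [← Algebra.norm_eq_prod_embeddings, eq_ratCast, Complex.norm_ratCast]
    _ = ∏ τ : K →+* ℂ, ‖τ x‖ := by
        rw [norm_prod, ← Fintype.prod_equiv (RingHom.equivRatAlgHom K ℂ) (fun τ => ‖τ x‖)
          (fun φ => ‖φ x‖) fun _ => by simp [RingHom.equivRatAlgHom_apply]]
    _ = ∏ σ : K →+* ℝ, |σ x| :=
        (Fintype.prod_bijective _ hbij _ _ fun σ => by simp [Complex.norm_real]).symm

theorem one_le_prod_abs_of_card_eq_finrank
    (hK : Fintype.card (K →+* ℝ) = Module.finrank ℚ K) {x : 𝓞 K} (hx : x ≠ 0) :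
    1 ≤ ∏ σ : K →+* ℝ, |σ (x : K)| := by
  rw [← abs_norm_eq_prod_abs_of_card_eq_finrank hK, ← Algebra.coe_norm_int]
  exact_mod_cast Int.one_le_abs (Algebra.norm_ne_zero_iff.mpr hx)

end NormProduct

section WeightedNorm

variable {K : Type} [Field K] [NumberField K] {r : (K →+* ℝ) → ℝ}

theorem mem_posWeights {σ : K →+* ℝ} : σ ∈ posWeights K r ↔ 0 < r σ := by
  simp [posWeights]

theorem sum_posWeights (hr0 : ∀ σ, 0 ≤ r σ) (hr1 : ∑ σ : K →+* ℝ, r σ = 1) :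
    ∑ σ ∈ posWeights K r, r σ = 1 :=
  hr1 ▸ sum_subset (subset_univ _) fun σ _ hσ =>
    le_antisymm (not_lt.mp (mt mem_posWeights.mpr hσ)) (hr0 σ)

theorem one_le_prod_posWeights_abs {ε : ℝ} (hK : Fintype.card (K →+* ℝ) = Module.finrank ℚ K)
    (hε1 : ε ≤ 1) {q : 𝓞 K} (hq : q ∈ OKre K r ε) :
    1 ≤ ∏ σ ∈ posWeights K r, |σ (q : K)| := by
  have hS₂ : ∏ σ ∈ univ.filter (fun σ => ¬ 0 < r σ), |σ (q : K)| ≤ 1 :=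
    prod_le_one (fun _ _ => abs_nonneg _) fun σ hσ => (hq.2 σ (mem_filter.mp hσ).2).trans hε1
  calc 1 ≤ ∏ σ : K →+* ℝ, |σ (q : K)| := one_le_prod_abs_of_card_eq_finrank hK hq.1
    _ = (∏ σ ∈ posWeights K r, |σ (q : K)|) *
          ∏ σ ∈ univ.filter (fun σ => ¬ 0 < r σ), |σ (q : K)| :=
        (prod_filter_mul_prod_filter_not _ _ _).symm
    _ ≤ ∏ σ ∈ posWeights K r, |σ (q : K)| :=
        mul_le_of_le_one_right (prod_nonneg fun _ _ => abs_nonneg _) hS₂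

variable (hS₁ : (posWeights K r).Nonempty)

theorem rnorm_nonneg (x : (K →+* ℝ) → ℝ) : 0 ≤ rnorm K r hS₁ x :=
  let ⟨_, hσ⟩ := hS₁
  (Real.rpow_nonneg (abs_nonneg _) _).trans (le_sup' (fun σ => |x σ| ^ (1 / r σ)) hσ)

theorem abs_le_rnorm_rpow (x : (K →+* ℝ) → ℝ) {σ : K →+* ℝ} (hσ : σ ∈ posWeights K r) :
    |x σ| ≤ rnorm K r hS₁ x ^ r σ := by
  have hrσ : 0 < r σ := mem_posWeights.mp hσ
  calc |x σ| = (|x σ| ^ (1 / r σ)) ^ r σ := by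
        rw [← Real.rpow_mul (abs_nonneg _), one_div_mul_cancel hrσ.ne', Real.rpow_one]
    _ ≤ rnorm K r hS₁ x ^ r σ :=
        Real.rpow_le_rpow (Real.rpow_nonneg (abs_nonneg _) _)
          (le_sup' (fun σ => |x σ| ^ (1 / r σ)) hσ) hrσ.le

theorem prod_posWeights_rnorm_rpow (hr0 : ∀ σ, 0 ≤ r σ) (hr1 : ∑ σ : K →+* ℝ, r σ = 1)
    (x : (K →+* ℝ) → ℝ) : ∏ σ ∈ posWeights K r, rnorm K r hS₁ x ^ r σ = rnorm K r hS₁ x := by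
  rw [← Real.rpow_sum_of_nonneg (rnorm_nonneg hS₁ x) fun σ _ => hr0 σ, sum_posWeights hr0 hr1,
    Real.rpow_one]

theorem one_le_rnorm (hr0 : ∀ σ, 0 ≤ r σ) (hr1 : ∑ σ : K →+* ℝ, r σ = 1)
    {x : (K →+* ℝ) → ℝ} (hx : 1 ≤ ∏ σ ∈ posWeights K r, |x σ|) : 1 ≤ rnorm K r hS₁ x :=
  calc 1 ≤ ∏ σ ∈ posWeights K r, |x σ| := hx
    _ ≤ ∏ σ ∈ posWeights K r, rnorm K r hS₁ x ^ r σ :=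
        prod_le_prod (fun _ _ => abs_nonneg _) fun _ hσ => abs_le_rnorm_rpow hS₁ x hσ
    _ = rnorm K r hS₁ x := prod_posWeights_rnorm_rpow hS₁ hr0 hr1 x

theorem height_nonneg (q : 𝓞 K) : 0 ≤ height K r hS₁ q :=
  let ⟨_, hσ⟩ := hS₁
  (mul_nonneg (abs_nonneg _) (Real.rpow_nonneg (rnorm_nonneg hS₁ _) _)).trans
    (le_sup' (fun σ => |σ (q : K)| * rnorm K r hS₁ (galoisEmbed K (q : K)) ^ r σ) hσ)

theorem rnorm_le_height_pow_card (hr0 : ∀ σ, 0 ≤ r σ) (hr1 : ∑ σ : K →+* ℝ, r σ = 1)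
    {q : 𝓞 K} (hq : 1 ≤ ∏ σ ∈ posWeights K r, |σ (q : K)|) :
    rnorm K r hS₁ (galoisEmbed K (q : K)) ≤ height K r hS₁ q ^ (posWeights K r).card := by
  set N := rnorm K r hS₁ (galoisEmbed K (q : K))
  calc N = 1 * ∏ σ ∈ posWeights K r, N ^ r σ := by
        rw [one_mul, prod_posWeights_rnorm_rpow hS₁ hr0 hr1]
    _ ≤ (∏ σ ∈ posWeights K r, |σ (q : K)|) * ∏ σ ∈ posWeights K r, N ^ r σ :=
        mul_le_mul_of_nonneg_right hq
          (prod_nonneg fun _ _ => Real.rpow_nonneg (rnorm_nonneg hS₁ _) _)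
    _ = ∏ σ ∈ posWeights K r, |σ (q : K)| * N ^ r σ := prod_mul_distrib.symm
    _ ≤ ∏ _σ ∈ posWeights K r, height K r hS₁ q :=
        prod_le_prod
          (fun _ _ => mul_nonneg (abs_nonneg _) (Real.rpow_nonneg (rnorm_nonneg hS₁ _) _))
          fun _ hσ => le_sup' (fun σ => |σ (q : K)| * N ^ r σ) hσ
    _ = height K r hS₁ q ^ (posWeights K r).card := prod_const _

end WeightedNorm

theorem rnorm_rpow_le_height_general (K : Type) [Field K] [NumberField K]
    (htotallyreal : Fintype.card (K →+* ℝ) = Module.finrank ℚ K)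
    (r : (K →+* ℝ) → ℝ) (hr0 : ∀ σ, 0 ≤ r σ) (hr1 : ∑ σ : K →+* ℝ, r σ = 1)
    (hS₁ : (posWeights K r).Nonempty)
    (ε : ℝ) (hε1 : ε ≤ 1)
    (q : 𝓞 K) (hq : q ∈ OKre K r ε) :
    (rnorm K r hS₁ (galoisEmbed K (q : K))) ^ ((1 : ℝ) / (Fintype.card (K →+* ℝ))) ≤
      height K r hS₁ q := by
  have hprod := one_le_prod_posWeights_abs htotallyreal hε1 hq
  have hN1 := one_le_rnorm hS₁ hr0 hr1 (x := galoisEmbed K (q : K)) hprod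
  have hNH := rnorm_le_height_pow_card hS₁ hr0 hr1 hprod
  have hk : (0 : ℝ) < (posWeights K r).card := by exact_mod_cast hS₁.card_pos
  have hkd : ((posWeights K r).card : ℝ) ≤ Fintype.card (K →+* ℝ) := by
    exact_mod_cast card_le_univ _
  calc rnorm K r hS₁ (galoisEmbed K (q : K)) ^ ((1 : ℝ) / Fintype.card (K →+* ℝ))
      ≤ rnorm K r hS₁ (galoisEmbed K (q : K)) ^ ((posWeights K r).card : ℝ)⁻¹ :=
        Real.rpow_le_rpow_of_exponent_le hN1 (by rw [one_div]; exact inv_anti₀ hk hkd)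
    _ ≤ height K r hS₁ q :=
        (Real.rpow_inv_le_iff_of_pos (zero_le_one.trans hN1) (height_nonneg hS₁ q) hk).mpr
          (by rwa [Real.rpow_natCast])

/-- For all `q ∈ 𝓞_K(r,ε)` (with `ε ≤ 1`): `‖θ(q)‖_r^{1/d} ≤ H(q)`,
where `d = [K : ℚ]` is the number of real embeddings of the totally real field `K`. -/
theorem rnorm_rpow_le_height (K : Type) [Field K] [NumberField K]
    (htotallyreal : Fintype.card (K →+* ℝ) = Module.finrank ℚ K)
    (r : (K →+* ℝ) → ℝ) (hr0 : ∀ σ, 0 ≤ r σ) (hr1 : ∑ σ : K →+* ℝ, r σ = 1)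
    (hS₁ : (posWeights K r).Nonempty)
    (ε : ℝ) (hε : 0 < ε) (hε1 : ε ≤ 1)
    (q : 𝓞 K) (hq : q ∈ OKre K r ε) :
    (rnorm K r hS₁ (galoisEmbed K (q : K))) ^ ((1 : ℝ) / (Fintype.card (K →+* ℝ))) ≤
      height K r hS₁ q :=
  rnorm_rpow_le_height_general K htotallyreal r hr0 hr1 hS₁ ε hε1 q hq
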